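/- arXiv:math/0611107 — 4 statements merged into one kernel-verified Lean document; each statement's English description precedes it below -/
import Mathlib

section
/- Every continuous piecewise linear positively homogeneous function f : ℝ^n → ℝ can be written as a difference g − h of two convex piecewise linear positively homogeneous functions. -/
/-- `f` is positively homogeneous: `f (t • x) = t * f x` for `t ≥ 0`. -/
def PosHomog {n : ℕ} (f : (Fin n → ℝ) → ℝ) : Prop :=
  ∀ t : ℝ, 0 ≤ t → ∀ x, f (t • x) = t * f x

/-- `f` is piecewise linear: finitely many closed convex cones cover `ℝ^n`,
and on each of them `f` coincides with a linear function. -/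
def PiecewiseLin {n : ℕ} (f : (Fin n → ℝ) → ℝ) : Prop :=
  ∃ (k : ℕ) (C : Fin k → Set (Fin n → ℝ)) (l : Fin k → ((Fin n → ℝ) →ₗ[ℝ] ℝ)),
    (∀ i, IsClosed (C i) ∧ Convex ℝ (C i) ∧ ∀ t : ℝ, 0 ≤ t → ∀ x ∈ C i, t • x ∈ C i) ∧
    (⋃ i, C i) = Set.univ ∧
    ∀ i, ∀ x ∈ C i, f x = l i x

/-! Let `l i` be the linear pieces of `f` and `h = ∑_{p,q} |l p - l q|`. Refining the pieces of
`f` by the signs of the `l p - l q` shows that `h` and `g = f + h` are piecewise linear, hence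
positively homogeneous; `h` is clearly convex.

`g` is convex because at each `x₀`, lying in piece `j`, it has the linear minorant
`l j + ∑ ± (l p - l q)` (signs taken at `x₀`) touching it at `x₀`. To check the minorant at `y`,
walk from `x₀` to `y`: each piece `c` met is entered at a point where `l c` agrees with `l c'` for
a piece `c'` entered earlier (or `c' = j` if `x₀ ∈ c`), and beyond that point `l c' - l c` is
bounded by the gap between `|l c' - l c|` and its supporting function at `x₀`, since an affine
function that is positive at `x₀` and vanishes later stays nonpositive. Chaining along the
pieces in order of entry time uses each pair at most once. -/

open Set AffineMap

section ClosedConvexCone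

variable {E : Type*} [AddCommGroup E] [Module ℝ E] [TopologicalSpace E]

def IsClosedConvexCone (C : Set E) : Prop :=
  IsClosed C ∧ Convex ℝ C ∧ ∀ t : ℝ, 0 ≤ t → ∀ x ∈ C, t • x ∈ C

lemma isClosedConvexCone_univ : IsClosedConvexCone (univ : Set E) :=
  ⟨isClosed_univ, convex_univ, fun _ _ _ _ => mem_univ _⟩

lemma IsClosedConvexCone.inter {C D : Set E} (hC : IsClosedConvexCone C)
    (hD : IsClosedConvexCone D) : IsClosedConvexCone (C ∩ D) :=
  ⟨hC.1.inter hD.1, hC.2.1.inter hD.2.1,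
    fun t ht x hx => ⟨hC.2.2 t ht x hx.1, hD.2.2 t ht x hx.2⟩⟩

lemma isClosedConvexCone_setOf_nonneg {φ : E →ₗ[ℝ] ℝ} (hφ : Continuous φ) :
    IsClosedConvexCone {x | 0 ≤ φ x} :=
  ⟨isClosed_le continuous_const hφ, convex_halfSpace_ge φ.isLinear 0,
    fun t ht x hx => by simpa using mul_nonneg ht hx⟩

end ClosedConvexCone

section PiecewiseLin

variable {n : ℕ}

lemma piecewiseLin_of_fintype {ι : Type*} [Fintype ι] {f : (Fin n → ℝ) → ℝ}
    (C : ι → Set (Fin n → ℝ)) (L : ι → (Fin n → ℝ) →ₗ[ℝ] ℝ)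
    (hC : ∀ i, IsClosedConvexCone (C i)) (hcov : ∀ x, ∃ i, x ∈ C i)
    (hf : ∀ i, ∀ x ∈ C i, f x = L i x) : PiecewiseLin f := by
  let e := Fintype.equivFin ι
  refine ⟨Fintype.card ι, C ∘ e.symm, L ∘ e.symm, fun _ => hC _,
    iUnion_eq_univ_iff.2 fun x => ?_, fun _ => hf _⟩
  obtain ⟨i, hi⟩ := hcov x
  exact ⟨e i, by simpa using hi⟩

lemma PiecewiseLin.posHomog {f : (Fin n → ℝ) → ℝ} (hf : PiecewiseLin f) : PosHomog f := by
  obtain ⟨k, C, L, hC, hcov, hfL⟩ := hf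
  intro t ht x
  obtain ⟨i, hi⟩ := iUnion_eq_univ_iff.1 hcov x
  rw [hfL i _ ((hC i).2.2 t ht x hi), hfL i x hi, map_smul, smul_eq_mul]

lemma piecewiseLin_zero : PiecewiseLin (0 : (Fin n → ℝ) → ℝ) :=
  ⟨1, fun _ => univ, fun _ => 0, fun _ => isClosedConvexCone_univ, iUnion_const _,
    fun _ _ _ => rfl⟩

lemma PiecewiseLin.add {f g : (Fin n → ℝ) → ℝ} (hf : PiecewiseLin f) (hg : PiecewiseLin g) :
    PiecewiseLin (f + g) := by
  obtain ⟨k, C, L, hC, hCcov, hfL⟩ := hf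
  obtain ⟨m, D, L', hD, hDcov, hgL⟩ := hg
  refine piecewiseLin_of_fintype (fun p : Fin k × Fin m => C p.1 ∩ D p.2)
    (fun p => L p.1 + L' p.2) (fun p => IsClosedConvexCone.inter (hC p.1) (hD p.2)) (fun x => ?_)
    (fun p x hx => by simp [hfL _ x hx.1, hgL _ x hx.2])
  obtain ⟨i, hi⟩ := iUnion_eq_univ_iff.1 hCcov x
  obtain ⟨j, hj⟩ := iUnion_eq_univ_iff.1 hDcov x
  exact ⟨(i, j), hi, hj⟩

lemma PiecewiseLin.sum {ι : Type*} (s : Finset ι) {f : ι → (Fin n → ℝ) → ℝ}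
    (hf : ∀ i ∈ s, PiecewiseLin (f i)) : PiecewiseLin (∑ i ∈ s, f i) := by
  classical
  induction s using Finset.induction_on with
  | empty => simpa using piecewiseLin_zero
  | insert i s hi ih =>
    rw [Finset.sum_insert hi]
    exact (hf i (Finset.mem_insert_self i s)).add
      (ih fun j hj => hf j (Finset.mem_insert_of_mem hj))

lemma piecewiseLin_abs (φ : (Fin n → ℝ) →ₗ[ℝ] ℝ) : PiecewiseLin fun x => |φ x| := by
  refine ⟨2, fun i => {x | 0 ≤ ![φ, -φ] i x}, ![φ, -φ],
    fun i => isClosedConvexCone_setOf_nonneg (LinearMap.continuous_of_finiteDimensional _),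
    iUnion_eq_univ_iff.2 fun x => ?_, Fin.forall_fin_two.2 ⟨?_, ?_⟩⟩
  · rcases le_total 0 (φ x) with h | h
    · exact ⟨0, by simpa using h⟩
    · exact ⟨1, by simpa using h⟩
  · exact fun x hx => abs_of_nonneg (by simpa using hx)
  · exact fun x hx => abs_of_nonpos (by simpa using hx)

end PiecewiseLin

section AbsDiffSum

variable {E ι : Type*} [AddCommGroup E] [Module ℝ E]

def absDiffSum [Fintype ι] (l : ι → E →ₗ[ℝ] ℝ) (x : E) : ℝ :=
  ∑ p : ι × ι, |(l p.1 - l p.2) x|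

lemma convexOn_abs_linearMap (φ : E →ₗ[ℝ] ℝ) : ConvexOn ℝ univ fun x => |φ x| :=
  (φ.convexOn convex_univ).sup ((-φ).convexOn convex_univ)

lemma convexOn_absDiffSum [Fintype ι] (l : ι → E →ₗ[ℝ] ℝ) : ConvexOn ℝ univ (absDiffSum l) := by
  refine ⟨convex_univ, fun x _ y _ a b ha hb hab => ?_⟩
  simp only [absDiffSum, smul_eq_mul, Finset.mul_sum, ← Finset.sum_add_distrib]
  exact Finset.sum_le_sum fun p _ => (convexOn_abs_linearMap _).2 trivial trivial ha hb hab

lemma piecewiseLin_absDiffSum {n : ℕ} [Fintype ι] (l : ι → (Fin n → ℝ) →ₗ[ℝ] ℝ) :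
    PiecewiseLin (absDiffSum l) := by
  have : absDiffSum l = ∑ p : ι × ι, fun x => |(l p.1 - l p.2) x| := by
    ext x
    simp [absDiffSum]
  rw [this]
  exact PiecewiseLin.sum _ fun p _ => piecewiseLin_abs _

lemma convexOn_univ_of_exists_linearMap_le {g : E → ℝ}
    (h : ∀ x, ∃ M : E →ₗ[ℝ] ℝ, M x = g x ∧ ∀ y, M y ≤ g y) : ConvexOn ℝ univ g := by
  refine ⟨convex_univ, fun x _ y _ a b ha hb hab => ?_⟩
  obtain ⟨M, hMx, hM⟩ := h (a • x + b • y)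
  rw [← hMx, map_add, map_smul, map_smul]
  exact add_le_add (smul_le_smul_of_nonneg_left (hM x) ha)
    (smul_le_smul_of_nonneg_left (hM y) hb)

noncomputable def supportSign (φ : E →ₗ[ℝ] ℝ) (x₀ : E) : ℝ := if 0 < φ x₀ then 1 else -1

noncomputable def absGap (φ : E →ₗ[ℝ] ℝ) (x₀ x : E) : ℝ := |φ x| - supportSign φ x₀ * φ x

lemma supportSign_mul_self (φ : E →ₗ[ℝ] ℝ) (x₀ : E) : supportSign φ x₀ * φ x₀ = |φ x₀| := by
  unfold supportSign
  split_ifs with h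
  · rw [one_mul, abs_of_pos h]
  · rw [neg_one_mul, abs_of_nonpos (not_lt.1 h)]

lemma absGap_nonneg (φ : E →ₗ[ℝ] ℝ) (x₀ x : E) : 0 ≤ absGap φ x₀ x := by
  unfold absGap supportSign
  split_ifs
  · linarith [le_abs_self (φ x)]
  · linarith [neg_abs_le (φ x)]

lemma le_absGap_of_map_lineMap_eq_zero (φ : E →ₗ[ℝ] ℝ) (x₀ y : E) {τ s : ℝ} (hτ : 0 ≤ τ)
    (hτs : τ ≤ s) (h : φ (lineMap x₀ y τ) = 0) :
    φ (lineMap x₀ y s) ≤ absGap φ x₀ (lineMap x₀ y s) := by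
  have hline : ∀ t, φ (lineMap x₀ y t) = t * (φ y - φ x₀) + φ x₀ := fun t => by
    rw [← φ.coe_toAffineMap, apply_lineMap, lineMap_apply_ring']
  rw [hline] at h
  unfold absGap supportSign
  split_ifs with hpos
  · have hslope : φ y - φ x₀ < 0 := by
      by_contra! hslope
      nlinarith [mul_nonneg hτ hslope]
    have hs : φ (lineMap x₀ y s) ≤ 0 := by
      rw [hline]
      nlinarith [mul_nonneg (sub_nonneg.2 hτs) (neg_nonneg.2 hslope.le)]
    rw [abs_of_nonpos hs]
    linarith
  · linarith [abs_nonneg (φ (lineMap x₀ y s))]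

end AbsDiffSum

section Segment

variable {E ι : Type*} [AddCommGroup E] [Module ℝ E] (Q : ι → Set E) (x₀ y : E)

def hitTimes (c : ι) : Set ℝ := Icc 0 1 ∩ lineMap x₀ y ⁻¹' Q c

noncomputable def entryTime (c : ι) : ℝ := sInf (hitTimes Q x₀ y c)

variable {Q x₀ y}

lemma entryTime_le {c : ι} {t : ℝ} (ht : t ∈ hitTimes Q x₀ y c) : entryTime Q x₀ y c ≤ t :=
  csInf_le ⟨0, fun _ hs => hs.1.1⟩ ht

lemma entryTime_nonneg {c : ι} (hc : (hitTimes Q x₀ y c).Nonempty) : 0 ≤ entryTime Q x₀ y c :=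
  le_csInf hc fun _ hs => hs.1.1

variable [TopologicalSpace E] [IsTopologicalAddGroup E] [ContinuousSMul ℝ E]

lemma isClosed_hitTimes {c : ι} (hQ : IsClosed (Q c)) : IsClosed (hitTimes Q x₀ y c) :=
  isClosed_Icc.inter (hQ.preimage (lineMap_continuous (R := ℝ)))

lemma entryTime_mem {c : ι} (hQ : IsClosed (Q c)) (hc : (hitTimes Q x₀ y c).Nonempty) :
    entryTime Q x₀ y c ∈ hitTimes Q x₀ y c :=
  (isClosed_hitTimes hQ).csInf_mem hc ⟨0, fun _ hs => hs.1.1⟩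

lemma exists_entryTime_lt [Finite ι] (hQ : ∀ i, IsClosed (Q i)) (hcov : ∀ x, ∃ i, x ∈ Q i)
    {c : ι} (hc : (hitTimes Q x₀ y c).Nonempty) (hpos : 0 < entryTime Q x₀ y c) :
    ∃ c', entryTime Q x₀ y c' < entryTime Q x₀ y c ∧
      entryTime Q x₀ y c ∈ hitTimes Q x₀ y c' := by
  set τ := entryTime Q x₀ y c
  have hτ1 : τ ≤ 1 := (entryTime_mem (hQ c) hc).1.2
  have hcover : Ico 0 τ ⊆ ⋃ c', hitTimes Q x₀ y c' ∩ Ico 0 τ := fun t ht => by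
    obtain ⟨c', hc'⟩ := hcov (lineMap x₀ y t)
    exact mem_iUnion.2 ⟨c', ⟨⟨ht.1, ht.2.le.trans hτ1⟩, hc'⟩, ht⟩
  have hτcl : τ ∈ closure (Ico 0 τ) := by
    rw [closure_Ico hpos.ne]
    exact right_mem_Icc.2 hpos.le
  have hτcl' := closure_mono hcover hτcl
  rw [closure_iUnion_of_finite] at hτcl'
  obtain ⟨c', hc'⟩ := mem_iUnion.1 hτcl'
  obtain ⟨t, ht, htτ⟩ := closure_nonempty_iff.1 ⟨τ, hc'⟩
  exact ⟨c', (entryTime_le ht).trans_lt htτ.2,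
    (isClosed_hitTimes (hQ c')).closure_subset (closure_mono inter_subset_left hc')⟩

variable {f : E → ℝ} {l : ι → E →ₗ[ℝ] ℝ}

lemma exists_finset_le_sum_absGap [Finite ι] (hQ : ∀ i, IsClosed (Q i)) (hcov : ∀ x, ∃ i, x ∈ Q i)
    (hf : ∀ i, ∀ x ∈ Q i, f x = l i x) {j : ι} (hj : x₀ ∈ Q j) (c : ι)
    (hc : (hitTimes Q x₀ y c).Nonempty) :
    ∃ P : Finset (ι × ι), (∀ p ∈ P, entryTime Q x₀ y p.2 ≤ entryTime Q x₀ y c) ∧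
      ∀ s ∈ Icc (entryTime Q x₀ y c) 1,
        (l j - l c) (lineMap x₀ y s) ≤ ∑ p ∈ P, absGap (l p.1 - l p.2) x₀ (lineMap x₀ y s) := by
  classical
  induction c using
    (Finite.wellFounded_of_trans_of_irrefl (InvImage (· < ·) (entryTime Q x₀ y))).induction with
  | _ c ih =>
  have hτc := entryTime_mem (hQ c) hc
  obtain ⟨c', P', hc', hP'τ, hP'⟩ : ∃ (c' : ι) (P' : Finset (ι × ι)),
      lineMap x₀ y (entryTime Q x₀ y c) ∈ Q c' ∧
      (∀ p ∈ P', entryTime Q x₀ y p.2 < entryTime Q x₀ y c) ∧ ∀ s ∈ Icc (entryTime Q x₀ y c) 1,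
        (l j - l c') (lineMap x₀ y s) ≤ ∑ p ∈ P', absGap (l p.1 - l p.2) x₀ (lineMap x₀ y s) := by
    rcases (entryTime_nonneg hc).eq_or_lt with h0 | hpos
    · exact ⟨j, ∅, by rwa [← h0, lineMap_apply_zero], by simp, fun s _ => by simp⟩
    · obtain ⟨c', hlt, hmem⟩ := exists_entryTime_lt hQ hcov hc hpos
      obtain ⟨P', hP'τ, hP'⟩ := ih c' hlt ⟨_, hmem⟩
      exact ⟨c', P', hmem.2, fun p hp => (hP'τ p hp).trans_lt hlt,
        fun s hs => hP' s ⟨hlt.le.trans hs.1, hs.2⟩⟩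
  have hnew : (c', c) ∉ P' := fun h => (hP'τ _ h).false
  refine ⟨insert (c', c) P', ?_, fun s hs => ?_⟩
  · simpa using fun p hp => (hP'τ p hp).le
  have hcross : (l c' - l c) (lineMap x₀ y s) ≤ absGap (l c' - l c) x₀ (lineMap x₀ y s) :=
    le_absGap_of_map_lineMap_eq_zero _ x₀ y (entryTime_nonneg hc) hs.1
      (by rw [LinearMap.sub_apply, ← hf c' _ hc', ← hf c _ hτc.2, sub_self])
  rw [Finset.sum_insert hnew]
  calc (l j - l c) (lineMap x₀ y s)
      = (l c' - l c) (lineMap x₀ y s) + (l j - l c') (lineMap x₀ y s) := by simp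
    _ ≤ _ := add_le_add hcross (hP' s hs)

lemma exists_linearMap_le_add_absDiffSum [Fintype ι] (hQ : ∀ i, IsClosed (Q i))
    (hcov : ∀ x, ∃ i, x ∈ Q i) (hf : ∀ i, ∀ x ∈ Q i, f x = l i x) (x₀ : E) :
    ∃ M : E →ₗ[ℝ] ℝ, M x₀ = (f + absDiffSum l) x₀ ∧ ∀ y, M y ≤ (f + absDiffSum l) y := by
  obtain ⟨j, hj⟩ := hcov x₀
  refine ⟨l j + ∑ p : ι × ι, supportSign (l p.1 - l p.2) x₀ • (l p.1 - l p.2), ?_, fun y => ?_⟩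
  · simp only [Pi.add_apply, absDiffSum, hf j x₀ hj, LinearMap.add_apply, LinearMap.sum_apply,
      LinearMap.smul_apply, smul_eq_mul, supportSign_mul_self]
  obtain ⟨c, hc⟩ := hcov y
  have h1 : (1 : ℝ) ∈ hitTimes Q x₀ y c := ⟨right_mem_Icc.2 zero_le_one, by simpa using hc⟩
  obtain ⟨P, -, hP⟩ := exists_finset_le_sum_absGap hQ hcov hf hj c ⟨1, h1⟩
  have hy := (hP 1 ⟨entryTime_le h1, le_rfl⟩).trans <|
    Finset.sum_le_sum_of_subset_of_nonneg (Finset.subset_univ P) fun p _ _ => absGap_nonneg _ _ _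
  simp only [lineMap_apply_one, absGap, Finset.sum_sub_distrib] at hy
  simp only [Pi.add_apply, absDiffSum, hf c y hc, LinearMap.add_apply, LinearMap.sum_apply,
    LinearMap.smul_apply, smul_eq_mul, LinearMap.sub_apply] at hy ⊢
  linarith

lemma convexOn_add_absDiffSum [Fintype ι] (hQ : ∀ i, IsClosed (Q i))
    (hcov : ∀ x, ∃ i, x ∈ Q i) (hf : ∀ i, ∀ x ∈ Q i, f x = l i x) :
    ConvexOn ℝ univ (f + absDiffSum l) :=
  convexOn_univ_of_exists_linearMap_le (exists_linearMap_le_add_absDiffSum hQ hcov hf)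

end Segment

theorem stmt_3_general {n : ℕ} (f : (Fin n → ℝ) → ℝ) (hpl : PiecewiseLin f) :
    ∃ g h : (Fin n → ℝ) → ℝ,
      ConvexOn ℝ Set.univ g ∧ ConvexOn ℝ Set.univ h ∧
      PosHomog g ∧ PosHomog h ∧ PiecewiseLin g ∧ PiecewiseLin h ∧
      f = g - h := by
  have ⟨k, Q, l, hQ, hcov, hf⟩ := hpl
  have hhpl : PiecewiseLin (absDiffSum l) := piecewiseLin_absDiffSum l
  have hgpl : PiecewiseLin (f + absDiffSum l) := hpl.add hhpl
  refine ⟨f + absDiffSum l, absDiffSum l,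
    convexOn_add_absDiffSum (fun i => (hQ i).1) (iUnion_eq_univ_iff.1 hcov) hf,
    convexOn_absDiffSum l, hgpl.posHomog, hhpl.posHomog, hgpl, hhpl, by simp⟩

/-- Every continuous piecewise linear positively homogeneous
function on `ℝ^n` is a difference of two convex piecewise linear positively
homogeneous functions. -/
theorem stmt_3 {n : ℕ} (f : (Fin n → ℝ) → ℝ)
    (hc : Continuous f) (hh : PosHomog f) (hpl : PiecewiseLin f) :
    ∃ g h : (Fin n → ℝ) → ℝ,
      ConvexOn ℝ Set.univ g ∧ ConvexOn ℝ Set.univ h ∧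
      PosHomog g ∧ PosHomog h ∧ PiecewiseLin g ∧ PiecewiseLin h ∧
      f = g - h :=
  stmt_3_general f hpl
end

section
/- Minkowski addition of compact convex sets in ℝ^n satisfies the cancellation law: if A + C = B + C for compact convex sets A, B, C, then A = B. -/
open Pointwise Filter Topology Bornology

/-- Rådström cancellation: one-sided inclusion. -/
lemma radstrom_subset {E : Type*} [NormedAddCommGroup E] [NormedSpace ℝ E]
    {A B C : Set E} (hB : IsClosed B) (hBc : Convex ℝ B)
    (hC : IsBounded C) (hCne : C.Nonempty)
    (h : A + C ⊆ B + C) : A ⊆ B := by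
  intro a ha
  obtain ⟨c₀, hc₀⟩ := hCne
  have key : ∀ x ∈ C, ∃ b ∈ B, ∃ c ∈ C, a + x = b + c := by
    intro x hx
    have : a + x ∈ B + C := h (Set.add_mem_add ha hx)
    obtain ⟨b, hb, c, hc, hbc⟩ := this
    exact ⟨b, hb, c, hc, hbc.symm⟩
  choose! bf hbf cf hcf heq using key
  set f : ℕ → E := fun k => cf^[k] c₀ with hf
  have hfmem : ∀ k, f k ∈ C := by
    intro k
    induction k with
    | zero => exact hc₀
    | succ k ih =>
      have : f (k+1) = cf (f k) := Function.iterate_succ_apply' cf k c₀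
      rw [this]; exact hcf _ ih
  have hstep : ∀ k, a + f k = bf (f k) + f (k+1) := by
    intro k
    have : f (k+1) = cf (f k) := Function.iterate_succ_apply' cf k c₀
    rw [this]; exact heq _ (hfmem k)
  have hsum : ∀ k : ℕ, k • a + f 0 = (∑ i ∈ Finset.range k, bf (f i)) + f k := by
    intro k
    induction k with
    | zero => simp
    | succ k ih =>
      rw [succ_nsmul, Finset.sum_range_succ]
      have : k • a + a + f 0 = (k • a + f 0) + a := by abel
      rw [this, ih]
      have h2 : f k + a = a + f k := by abel
      rw [add_assoc, h2, hstep k]; abel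
  -- z k = average of the b's
  set z : ℕ → E := fun k => (k : ℝ)⁻¹ • ∑ i ∈ Finset.range k, bf (f i) with hz
  have hzB : ∀ k : ℕ, 1 ≤ k → z k ∈ B := by
    intro k hk
    have hk0 : (k : ℝ) ≠ 0 := Nat.cast_ne_zero.2 (by omega)
    have := hBc.sum_mem (t := Finset.range k) (w := fun _ => (k : ℝ)⁻¹)
      (z := fun i => bf (f i))
      (fun i _ => by positivity)
      (by simp [Finset.sum_const, hk0])
      (fun i _ => hbf _ (hfmem i))
    simpa [hz, Finset.smul_sum] using this
  have hzeq : ∀ k : ℕ, 1 ≤ k → z k = a + (k : ℝ)⁻¹ • (f 0 - f k) := by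
    intro k hk
    have hk0 : (k : ℝ) ≠ 0 := Nat.cast_ne_zero.2 (by omega)
    have hsum' : (∑ i ∈ Finset.range k, bf (f i)) = k • a + f 0 - f k := by
      have := hsum k; rw [this]; abel
    rw [hz]
    simp only [hsum', smul_sub, smul_add]
    rw [← Nat.cast_smul_eq_nsmul ℝ, smul_smul, inv_mul_cancel₀ hk0, one_smul]
    abel
  -- convergence
  obtain ⟨M, hM⟩ := hC.subset_closedBall 0
  have hnorm : ∀ x ∈ C, ‖x‖ ≤ M := fun x hx => by
    simpa using hM hx
  have htend : Tendsto z atTop (𝓝 a) := by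
    have h0 : Tendsto (fun k : ℕ => (k : ℝ)⁻¹ • (f 0 - f k)) atTop (𝓝 0) := by
      apply squeeze_zero_norm (a := fun k : ℕ => (2 * M) / k)
      · intro k
        rw [norm_smul, norm_inv, Real.norm_natCast, div_eq_inv_mul]
        gcongr
        calc ‖f 0 - f k‖ ≤ ‖f 0‖ + ‖f k‖ := norm_sub_le _ _
          _ ≤ M + M := add_le_add (hnorm _ (hfmem 0)) (hnorm _ (hfmem k))
          _ = 2 * M := by ring
      · exact tendsto_const_div_atTop_nhds_zero_nat _
    have : Tendsto (fun k : ℕ => a + (k : ℝ)⁻¹ • (f 0 - f k)) atTop (𝓝 (a + 0)) :=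
      tendsto_const_nhds.add h0
    rw [add_zero] at this
    apply this.congr'
    filter_upwards [eventually_ge_atTop 1] with k hk
    exact (hzeq k hk).symm
  exact hB.mem_of_tendsto htend (by filter_upwards [eventually_ge_atTop 1] with k hk using hzB k hk)

/-- Cancellation law for Minkowski addition of nonempty compact
convex subsets of `ℝ^n`. -/
theorem stmt_5 {n : ℕ} (A B C : Set (EuclideanSpace ℝ (Fin n)))
    (hA : IsCompact A) (hAc : Convex ℝ A) (hAne : A.Nonempty)
    (hB : IsCompact B) (hBc : Convex ℝ B) (hBne : B.Nonempty)
    (hC : IsCompact C) (hCc : Convex ℝ C) (hCne : C.Nonempty)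
    (h : A + C = B + C) : A = B := by
  apply Set.Subset.antisymm
  · exact radstrom_subset hB.isClosed hBc hC.isBounded hCne h.le
  · exact radstrom_subset hA.isClosed hAc hC.isBounded hCne h.ge
end

section
/- Let g be a Laurent polynomial in n variables over ℂ whose Newton polytope A (contained in the nonnegative orthant) intersects all coordinate hyperplanes, and let γ_1, γ_2 ∈ (ℤ^n)* have strictly positive integer components, such that A^{γ_1} and A^{γ_2} are vertices of A. Then the ratio of the coefficient of g at the vertex A^{γ_1} to the coefficient at A^{γ_2} equals (−1)^{⟨γ_1, A^{γ_1}⟩ + ⟨γ_2, A^{γ_2}⟩} times the product of the roots in ℂ∖{0} of the one-variable Laurent polynomial t ↦ g(t^{γ_2} + t^{−γ_1}), where t^{γ} denotes the point (t^{γ(e_1)}, ..., t^{γ(e_n)}). -/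
/-!
Multiplying `g (t ^ γ₂ + t ^ (-γ₁))` by `t ^ ⟨γ₁, A^{γ₁}⟩` turns it into a genuine polynomial `Q`:
every monomial `x ^ a` of `g` becomes `t ^ (⟨γ₁, A^{γ₁}⟩ - ⟨γ₁, a⟩) ∏ (t ^ (γ₁ i + γ₂ i) + 1) ^ a i`,
a monic polynomial of degree `⟨γ₁, A^{γ₁}⟩ + ⟨γ₂, a⟩` which vanishes at `0` unless `a = A^{γ₁}`.
Hence `Q 0` is the coefficient of `g` at `A^{γ₁}` and the leading coefficient of `Q` is the one at
`A^{γ₂}`, in degree `⟨γ₁, A^{γ₁}⟩ + ⟨γ₂, A^{γ₂}⟩`. The roots of `Q` are exactly the nonzero roots of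
the Laurent polynomial, and Vieta's formula for `Q 0` gives the ratio.
-/

open Polynomial

section ClearedSubstitution

variable {σ K : Type*} [Fintype σ] [Field K]

/-- The subtraction truncates unless `N` bounds the `γ₁`-weight of `a`, which every lemma assumes. -/
noncomputable def substMonomial (γ₁ γ₂ : σ → ℕ) (N : ℕ) (a : σ →₀ ℕ) : K[X] :=
  X ^ (N - ∑ i, γ₁ i * a i) * ∏ i, (X ^ (γ₁ i + γ₂ i) + 1) ^ a i

/-- The Laurent polynomial `t ↦ g (t ^ γ₂ + t ^ (-γ₁))`, cleared of denominators by `t ^ N`. -/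
noncomputable def clearedSubst (γ₁ γ₂ : σ → ℕ) (N : ℕ) (g : MvPolynomial σ K) : K[X] :=
  ∑ a ∈ g.support, C (g.coeff a) * substMonomial γ₁ γ₂ N a

variable {γ₁ γ₂ : σ → ℕ} {N : ℕ}

theorem monic_X_pow_add_one {k : ℕ} (hk : 0 < k) : (X ^ k + 1 : K[X]).Monic :=
  monic_X_pow_add (by rw [degree_one]; exact_mod_cast hk)

theorem monic_substMonomial (hγ : ∀ i, 0 < γ₁ i + γ₂ i) (a : σ →₀ ℕ) :
    (substMonomial γ₁ γ₂ N a : K[X]).Monic :=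
  (monic_X_pow _).mul <| monic_prod_of_monic _ _ fun i _ => (monic_X_pow_add_one (hγ i)).pow _

theorem natDegree_substMonomial (hγ : ∀ i, 0 < γ₁ i + γ₂ i) {a : σ →₀ ℕ}
    (ha : ∑ i, γ₁ i * a i ≤ N) :
    (substMonomial γ₁ γ₂ N a : K[X]).natDegree = N + ∑ i, γ₂ i * a i := by
  have hfac : ∀ i, (X ^ (γ₁ i + γ₂ i) + 1 : K[X]).natDegree = γ₁ i + γ₂ i := fun i => by
    rw [← C_1, natDegree_X_pow_add_C]
  rw [substMonomial, (monic_X_pow _).natDegree_mul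
      (monic_prod_of_monic _ _ fun i _ => (monic_X_pow_add_one (hγ i)).pow _),
    natDegree_X_pow, natDegree_prod_of_monic _ _ fun i _ => (monic_X_pow_add_one (hγ i)).pow _]
  simp only [natDegree_pow, hfac, add_mul, Finset.sum_add_distrib, mul_comm (a _)]
  omega

theorem eval_substMonomial {a : σ →₀ ℕ} (ha : ∑ i, γ₁ i * a i ≤ N) {t : K} (ht : t ≠ 0) :
    (substMonomial γ₁ γ₂ N a).eval t =
      t ^ N * ∏ i, (t ^ (γ₂ i : ℤ) + t ^ (-(γ₁ i : ℤ))) ^ a i := by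
  have hfac : ∀ i, t ^ (γ₁ i + γ₂ i) + 1 = (t ^ (γ₂ i : ℤ) + t ^ (-(γ₁ i : ℤ))) * t ^ γ₁ i :=
    fun i => by rw [zpow_neg, zpow_natCast, zpow_natCast, pow_add]; field_simp
  simp only [substMonomial, eval_mul, eval_pow, eval_X, eval_prod, eval_add, eval_one, hfac,
    mul_pow, Finset.prod_mul_distrib, ← pow_mul, Finset.prod_pow_eq_pow_sum]
  rw [mul_left_comm, ← pow_add, Nat.sub_add_cancel ha, mul_comm]

theorem eval_zero_substMonomial_self (hγ₁ : ∀ i, 0 < γ₁ i) (a : σ →₀ ℕ) :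
    (substMonomial γ₁ γ₂ (∑ i, γ₁ i * a i) a : K[X]).eval 0 = 1 := by
  simp [substMonomial, eval_prod, fun i => (hγ₁ i).ne']

theorem eval_zero_substMonomial_of_lt {a : σ →₀ ℕ} (ha : ∑ i, γ₁ i * a i < N) :
    (substMonomial γ₁ γ₂ N a : K[X]).eval 0 = 0 := by
  simp [substMonomial, (Nat.sub_pos_of_lt ha).ne']

variable {g : MvPolynomial σ K}

theorem eval_clearedSubst (hN : ∀ a ∈ g.support, ∑ i, γ₁ i * a i ≤ N) {t : K} (ht : t ≠ 0) :
    (clearedSubst γ₁ γ₂ N g).eval t =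
      t ^ N * MvPolynomial.eval (fun i => t ^ (γ₂ i : ℤ) + t ^ (-(γ₁ i : ℤ))) g := by
  rw [MvPolynomial.eval_eq', clearedSubst, eval_finsetSum, Finset.mul_sum]
  refine Finset.sum_congr rfl fun a ha => ?_
  rw [eval_mul, eval_C, eval_substMonomial (hN a ha) ht]
  ring

theorem eval_zero_clearedSubst (hγ₁ : ∀ i, 0 < γ₁ i) {a₁ : σ →₀ ℕ} (ha₁ : a₁ ∈ g.support)
    (hv₁ : ∀ b ∈ g.support, b ≠ a₁ → ∑ i, γ₁ i * b i < ∑ i, γ₁ i * a₁ i) :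
    (clearedSubst γ₁ γ₂ (∑ i, γ₁ i * a₁ i) g).eval 0 = g.coeff a₁ := by
  rw [clearedSubst, eval_finsetSum, Finset.sum_eq_single_of_mem a₁ ha₁ fun b hb hne => by
      rw [eval_mul, eval_zero_substMonomial_of_lt (hv₁ b hb hne), mul_zero],
    eval_mul, eval_C, eval_zero_substMonomial_self hγ₁, mul_one]

theorem le_of_forall_ne_imp_lt {α β : Type*} [Preorder β] {s : Finset α} {f : α → β} {a : α}
    (h : ∀ b ∈ s, b ≠ a → f b < f a) : ∀ b ∈ s, f b ≤ f a := fun b hb => by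
  by_cases hba : b = a
  · rw [hba]
  · exact (h b hb hba).le

theorem coeff_clearedSubst_of_isMax (hγ : ∀ i, 0 < γ₁ i + γ₂ i)
    (hN : ∀ a ∈ g.support, ∑ i, γ₁ i * a i ≤ N) {a₂ : σ →₀ ℕ} (ha₂ : a₂ ∈ g.support)
    (hv₂ : ∀ b ∈ g.support, b ≠ a₂ → ∑ i, γ₂ i * b i < ∑ i, γ₂ i * a₂ i) :
    (clearedSubst γ₁ γ₂ N g).coeff (N + ∑ i, γ₂ i * a₂ i) = g.coeff a₂ := by
  rw [clearedSubst, finsetSum_coeff, Finset.sum_eq_single_of_mem a₂ ha₂ fun b hb hne => by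
      rw [coeff_C_mul, coeff_eq_zero_of_natDegree_lt, mul_zero]
      rw [natDegree_substMonomial hγ (hN b hb)]
      exact Nat.add_lt_add_left (hv₂ b hb hne) N,
    coeff_C_mul, ← natDegree_substMonomial (K := K) hγ (hN a₂ ha₂),
    (monic_substMonomial hγ a₂).coeff_natDegree, mul_one]

theorem natDegree_clearedSubst_le (hγ : ∀ i, 0 < γ₁ i + γ₂ i)
    (hN : ∀ a ∈ g.support, ∑ i, γ₁ i * a i ≤ N) {a₂ : σ →₀ ℕ}
    (hv₂ : ∀ b ∈ g.support, b ≠ a₂ → ∑ i, γ₂ i * b i < ∑ i, γ₂ i * a₂ i) :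
    (clearedSubst γ₁ γ₂ N g).natDegree ≤ N + ∑ i, γ₂ i * a₂ i :=
  natDegree_sum_le_of_forall_le _ _ fun a ha =>
    (natDegree_C_mul_le _ _).trans <| by
      rw [natDegree_substMonomial hγ (hN a ha)]
      exact Nat.add_le_add_left (le_of_forall_ne_imp_lt hv₂ a ha) N

theorem natDegree_clearedSubst (hγ : ∀ i, 0 < γ₁ i + γ₂ i)
    (hN : ∀ a ∈ g.support, ∑ i, γ₁ i * a i ≤ N) {a₂ : σ →₀ ℕ} (ha₂ : a₂ ∈ g.support)
    (hv₂ : ∀ b ∈ g.support, b ≠ a₂ → ∑ i, γ₂ i * b i < ∑ i, γ₂ i * a₂ i) :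
    (clearedSubst γ₁ γ₂ N g).natDegree = N + ∑ i, γ₂ i * a₂ i :=
  (natDegree_clearedSubst_le hγ hN hv₂).antisymm <| le_natDegree_of_ne_zero <| by
    rw [coeff_clearedSubst_of_isMax hγ hN ha₂ hv₂]
    exact MvPolynomial.mem_support_iff.mp ha₂

theorem leadingCoeff_clearedSubst (hγ : ∀ i, 0 < γ₁ i + γ₂ i)
    (hN : ∀ a ∈ g.support, ∑ i, γ₁ i * a i ≤ N) {a₂ : σ →₀ ℕ} (ha₂ : a₂ ∈ g.support)
    (hv₂ : ∀ b ∈ g.support, b ≠ a₂ → ∑ i, γ₂ i * b i < ∑ i, γ₂ i * a₂ i) :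
    (clearedSubst γ₁ γ₂ N g).leadingCoeff = g.coeff a₂ := by
  rw [leadingCoeff, natDegree_clearedSubst hγ hN ha₂ hv₂, coeff_clearedSubst_of_isMax hγ hN ha₂ hv₂]

end ClearedSubstitution

section NonzeroRoots

variable {K : Type*} [Field K]

theorem roots_X_pow_mul_filter_ne_zero [DecidableEq K] {H : K[X]} (hH : H ≠ 0) (m : ℕ) :
    (X ^ m * H).roots.filter (· ≠ 0) = H.roots.filter (· ≠ 0) := by
  rw [roots_mul (mul_ne_zero (pow_ne_zero _ X_ne_zero) hH), roots_X_pow, Multiset.filter_add,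
    Multiset.nsmul_singleton, Multiset.filter_eq_nil.mpr fun b hb => by
      simp [Multiset.eq_of_mem_replicate hb], zero_add]

theorem X_pow_mul_eq_of_eval_eq [Infinite K] {H Q : K[X]} {m k : ℕ}
    (h : ∀ t : K, t ≠ 0 → t ^ m * H.eval t = t ^ k * Q.eval t) : X ^ m * H = X ^ k * Q :=
  eq_of_infinite_eval_eq _ _ <| (Set.finite_singleton 0).infinite_compl.mono fun t ht => by
    simpa using h t ht

theorem roots_filter_ne_zero_eq_of_eval_eq [DecidableEq K] [Infinite K] {H Q : K[X]} {m k : ℕ} (hH : H ≠ 0)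
    (hQ : Q.eval 0 ≠ 0) (h : ∀ t : K, t ≠ 0 → t ^ m * H.eval t = t ^ k * Q.eval t) :
    H.roots.filter (· ≠ 0) = Q.roots := by
  have hQ₀ : Q ≠ 0 := fun h => hQ (by rw [h, eval_zero])
  rw [← roots_X_pow_mul_filter_ne_zero hH m, X_pow_mul_eq_of_eval_eq h,
    roots_X_pow_mul_filter_ne_zero hQ₀ k, Multiset.filter_eq_self]
  rintro r hr rfl
  exact hQ (isRoot_of_mem_roots hr)

end NonzeroRoots

theorem stmt_15_general (n : ℕ) (g : MvPolynomial (Fin n) ℂ)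
    (γ1 γ2 : Fin n → ℕ) (hγ1 : ∀ i, 0 < γ1 i)
    (a1 a2 : Fin n →₀ ℕ) (ha1 : a1 ∈ g.support) (ha2 : a2 ∈ g.support)
    (hv1 : ∀ b ∈ g.support, b ≠ a1 → ∑ i, γ1 i * b i < ∑ i, γ1 i * a1 i)
    (hv2 : ∀ b ∈ g.support, b ≠ a2 → ∑ i, γ2 i * b i < ∑ i, γ2 i * a2 i)
    (H : Polynomial ℂ) (D : ℕ) (hH : H ≠ 0)
    (hHeval : ∀ t : ℂ, t ≠ 0 → H.eval t =
      t ^ D * MvPolynomial.eval (fun i => t ^ (γ2 i : ℤ) + t ^ (-(γ1 i : ℤ))) g) :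
    g.coeff a1 / g.coeff a2 =
      (-1 : ℂ) ^ (∑ i, γ1 i * a1 i + ∑ i, γ2 i * a2 i) *
        (H.roots.filter (· ≠ (0 : ℂ))).prod := by
  have hγ : ∀ i, 0 < γ1 i + γ2 i := fun i => Nat.add_pos_left (hγ1 i) _
  have hN := le_of_forall_ne_imp_lt hv1
  set Q := clearedSubst γ1 γ2 (∑ i, γ1 i * a1 i) g
  have hQ₀ : Q.eval 0 = g.coeff a1 := eval_zero_clearedSubst hγ1 ha1 hv1
  have hroots : H.roots.filter (· ≠ 0) = Q.roots :=
    roots_filter_ne_zero_eq_of_eval_eq (m := ∑ i, γ1 i * a1 i) (k := D) hH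
      (hQ₀ ▸ MvPolynomial.mem_support_iff.mp ha1) fun t ht => by
        rw [hHeval t ht, eval_clearedSubst hN ht]; ring
  have hvieta := (IsAlgClosed.splits Q).coeff_zero_eq_leadingCoeff_mul_prod_roots
  rw [coeff_zero_eq_eval_zero, hQ₀, natDegree_clearedSubst hγ hN ha2 hv2,
    leadingCoeff_clearedSubst hγ hN ha2 hv2] at hvieta
  rw [hroots, div_eq_iff (MvPolynomial.mem_support_iff.mp ha2)]
  linear_combination hvieta

/-- ratio of the two vertex coefficients of a polynomial `g`
whose Newton polytope meets every coordinate hyperplane, at the vertices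
selected by positive covectors `γ₁, γ₂`, equals
`(−1)^{⟨γ₁,A^{γ₁}⟩+⟨γ₂,A^{γ₂}⟩}` times the product of the nonzero roots of
the one-variable Laurent polynomial `t ↦ g(t^{γ₂} + t^{−γ₁})`, here realized
as the polynomial `H` with `H(t) = t^D · g(t^{γ₂} + t^{−γ₁})` for `t ≠ 0`. -/
theorem stmt_15 (n : ℕ) (g : MvPolynomial (Fin n) ℂ) (hg : g ≠ 0)
    (hcoord : ∀ i : Fin n, ∃ a ∈ g.support, a i = 0)
    (γ1 γ2 : Fin n → ℕ) (hγ1 : ∀ i, 0 < γ1 i) (hγ2 : ∀ i, 0 < γ2 i)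
    (a1 a2 : Fin n →₀ ℕ) (ha1 : a1 ∈ g.support) (ha2 : a2 ∈ g.support)
    (hv1 : ∀ b ∈ g.support, b ≠ a1 → ∑ i, γ1 i * b i < ∑ i, γ1 i * a1 i)
    (hv2 : ∀ b ∈ g.support, b ≠ a2 → ∑ i, γ2 i * b i < ∑ i, γ2 i * a2 i)
    (H : Polynomial ℂ) (D : ℕ) (hH : H ≠ 0)
    (hHeval : ∀ t : ℂ, t ≠ 0 → H.eval t =
      t ^ D * MvPolynomial.eval (fun i => t ^ (γ2 i : ℤ) + t ^ (-(γ1 i : ℤ))) g) :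
    g.coeff a1 / g.coeff a2 =
      (-1 : ℂ) ^ (∑ i, γ1 i * a1 i + ∑ i, γ2 i * a2 i) *
        (H.roots.filter (· ≠ (0 : ℂ))).prod :=
  stmt_15_general n g γ1 γ2 hγ1 a1 a2 ha1 ha2 hv1 hv2 H D hH hHeval
end

section
/- If f : (ℂ,0) → (ℂ,0) is an analytic germ with an isolated zero of multiplicity μ at 0, and its Newton polyhedron is [m, ∞), where m is the order of vanishing of f at 0, then μ = m, and hence μ ≥ m (the case n = 1 of the bound μ ≥ n!·V). -/
open Filter Topology

/-- case n = 1: if `f : (ℂ,0) → (ℂ,0)` is analytic with an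
isolated zero at `0`, `m` is the order of vanishing (the index of the first
nonvanishing Taylor coefficient) and `μ` is the multiplicity of the isolated
zero (i.e. `f(z) = z^μ g(z)` near `0` with `g` analytic, `g 0 ≠ 0`), then
`μ = m`, and hence `μ ≥ m`, i.e. the multiplicity is bounded below by the
(one-dimensional) mixed volume of the Newton polyhedron `[m, ∞)`. -/
theorem stmt_19 (f : ℂ → ℂ) (hf : AnalyticAt ℂ f 0) (hf0 : f 0 = 0)
    (hiso : ∀ᶠ z in 𝓝[≠] (0 : ℂ), f z ≠ 0)
    (m : ℕ) (hm : (∀ k < m, iteratedDeriv k f 0 = 0) ∧ iteratedDeriv m f 0 ≠ 0)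
    (μ : ℕ) (hμ : ∃ g : ℂ → ℂ, AnalyticAt ℂ g 0 ∧ g 0 ≠ 0 ∧
      ∀ᶠ z in 𝓝 (0 : ℂ), f z = z ^ μ * g z) :
    μ = m ∧ m ≤ μ := by
  obtain ⟨g, hg, hg0, hfg⟩ := hμ
  obtain ⟨p, hp⟩ := hf
  -- iterated derivatives equal factorial times power series coefficients
  have hcoeff : ∀ k : ℕ, iteratedDeriv k f 0 = (k.factorial : ℂ) • p.coeff k := by
    intro k
    obtain ⟨r, hr⟩ := hp
    have h1 := hr.factorial_smul (1 : ℂ) k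
    rw [iteratedDeriv_eq_iteratedFDeriv]
    rw [← h1]
    have : (p k fun _ => (1 : ℂ)) = p.coeff k := by
      simp [FormalMultilinearSeries.apply_eq_pow_smul_coeff]
    rw [this, ← Nat.cast_smul_eq_nsmul ℂ]
  have hcm : p.coeff m ≠ 0 := by
    intro h
    apply hm.2
    rw [hcoeff m, h, smul_zero]
  have hclt : ∀ k < m, p.coeff k = 0 := by
    intro k hk
    have := hm.1 k hk
    rw [hcoeff k] at this
    exact (smul_eq_zero.mp this).resolve_left (by exact_mod_cast k.factorial_ne_zero)
  have hpne : p ≠ 0 := by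
    intro h
    apply hcm
    simp [h, FormalMultilinearSeries.coeff]
  -- p.order = m
  have hord : p.order = m := by
    rcases lt_trichotomy p.order m with h | h | h
    · exact absurd (FormalMultilinearSeries.coeff_eq_zero.mp (hclt _ h))
        (p.apply_order_ne_zero hpne)
    · exact h
    · exact absurd (FormalMultilinearSeries.coeff_eq_zero.mpr
        (p.apply_eq_zero_of_lt_order h)) hcm
  -- representation of f with exponent m
  have hrep_m : ∃ h : ℂ → ℂ, AnalyticAt ℂ h 0 ∧ h 0 ≠ 0 ∧
      ∀ᶠ z in 𝓝 (0 : ℂ), f z = (z - 0) ^ m • h z := by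
    refine ⟨(Function.swap dslope 0)^[p.order] f,
      ⟨_, hp.has_fpower_series_iterate_dslope_fslope p.order⟩,
      hp.iterate_dslope_fslope_ne_zero hpne, ?_⟩
    filter_upwards [Filter.Eventually.of_forall hp.eq_pow_order_mul_iterate_dslope] with z hz
    rw [hz, hord]
  have hrep_μ : ∃ h : ℂ → ℂ, AnalyticAt ℂ h 0 ∧ h 0 ≠ 0 ∧
      ∀ᶠ z in 𝓝 (0 : ℂ), f z = (z - 0) ^ μ • h z := by
    refine ⟨g, hg, hg0, ?_⟩
    filter_upwards [hfg] with z hz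
    simpa [smul_eq_mul] using hz
  have : μ = m := AnalyticAt.unique_eventuallyEq_pow_smul_nonzero hrep_μ hrep_m
  exact ⟨this, this ▸ le_rfl⟩
end
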